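/- Let b ≥ 1 be an integer and s ≥ s₀ > b/2. There exist constants C(s) ≥ C(s₀) ≥ 1 such that for all matrices A, B on ℤᵇ with |A|_s < ∞ and |B|_s < ∞, the product AB, defined by (AB)_k^{k'} := Σ_{j∈ℤᵇ} A_k^j B_j^{k'}, is well defined (the sums converge absolutely) and satisfies the interpolation estimate |AB|_s ≤ C(s)|A|_{s₀}|B|_s + C(s₀)|A|_s|B|_{s₀}; in particular |AB|_s ≤ C(s)|A|_s|B|_s. -/

import Mathlib

open scoped ENNReal

/-- `|i| := max_k |i_k|` for a multi-index `i ∈ ℤᵇ`. -/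
def absIdx {b : ℕ} (i : Fin b → ℤ) : ℕ :=
  Finset.univ.sup fun k => (i k).natAbs

/-- `⟨i⟩ := max(1, |i|)`. -/
noncomputable def wt {b : ℕ} (i : Fin b → ℤ) : ℝ := max 1 (absIdx i : ℝ)

/-- Sobolev norm `‖u‖_s := (Σ_i ⟨i⟩^{2s} |u_i|²)^{1/2}` (valued in `ℝ≥0∞`). -/
noncomputable def sobNorm {b : ℕ} (u : (Fin b → ℤ) → ℂ) (s : ℝ) : ℝ≥0∞ :=
  (∑' i : Fin b → ℤ, ENNReal.ofReal (wt i ^ (2 * s)) * (‖u i‖₊ : ℝ≥0∞) ^ 2) ^ (1/2 : ℝ)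

/-- The `s`-decay norm of a bi-infinite matrix
`|A|_s := (Σ_h ⟨h⟩^{2s} (sup_{k-k'=h} |A_k^{k'}|)²)^{1/2}` (valued in `ℝ≥0∞`). -/
noncomputable def decayNorm {b : ℕ} (A : (Fin b → ℤ) → (Fin b → ℤ) → ℂ) (s : ℝ) : ℝ≥0∞ :=
  (∑' h : Fin b → ℤ, ENNReal.ofReal (wt h ^ (2 * s)) *
      (⨆ k : Fin b → ℤ, (‖A k (k - h)‖₊ : ℝ≥0∞)) ^ 2) ^ (1/2 : ℝ)

/-!
Write `d_A(h) := sup_{k - k' = h} |A_k^{k'}|`, so that `|A|_s` is the `ℓ²` norm of `⟨h⟩^s d_A(h)`.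
For `s₀ > b/2` the weight `⟨h⟩^{-s₀}` is square summable, hence by Cauchy–Schwarz
`‖d_A‖_{ℓ¹} ≤ (Σ_h ⟨h⟩^{-2s₀})^{1/2} |A|_{s₀}`; this already gives absolute convergence of the
entries of `AB`. The diagonal suprema of `AB` are dominated by the convolution `d_A ⋆ d_B`.
Peetre's inequality `⟨h⟩^s ≤ 2^s (⟨m⟩^s + ⟨h - m⟩^s)` splits the weight between the two factors,
and Minkowski's inequality together with Young's inequality `‖F ⋆ G‖₂ ≤ ‖F‖₂ ‖G‖₁` yields
`|AB|_s ≤ 2^s (|A|_s ‖d_B‖_{ℓ¹} + |B|_s ‖d_A‖_{ℓ¹})`.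
-/

open MeasureTheory

namespace ENNReal

section L2

variable {ι : Type*}

noncomputable def l2Norm (f : ι → ℝ≥0∞) : ℝ≥0∞ := (∑' i, f i ^ 2) ^ (1 / 2 : ℝ)

lemma rpow_half_sq (x : ℝ≥0∞) : (x ^ (1 / 2 : ℝ)) ^ 2 = x := by
  simpa using rpow_inv_natCast_pow two_ne_zero x

lemma sq_rpow_half (x : ℝ≥0∞) : (x ^ 2) ^ (1 / 2 : ℝ) = x := by
  simpa using pow_rpow_inv_natCast two_ne_zero x

lemma l2Norm_sq (f : ι → ℝ≥0∞) : l2Norm f ^ 2 = ∑' i, f i ^ 2 := rpow_half_sq _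

lemma l2Norm_mono {f g : ι → ℝ≥0∞} (hfg : ∀ i, f i ≤ g i) : l2Norm f ≤ l2Norm g :=
  rpow_le_rpow (ENNReal.tsum_le_tsum fun i => pow_le_pow_left₀ zero_le (hfg i) 2) (by norm_num)

lemma l2Norm_const_mul (c : ℝ≥0∞) (f : ι → ℝ≥0∞) :
    l2Norm (fun i => c * f i) = c * l2Norm f := by
  simp only [l2Norm, mul_pow, ENNReal.tsum_mul_left]
  rw [mul_rpow_of_nonneg _ _ (by norm_num), sq_rpow_half]

lemma tsum_mul_le_l2Norm_mul_l2Norm (f g : ι → ℝ≥0∞) :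
    ∑' i, f i * g i ≤ l2Norm f * l2Norm g := by
  let _ : MeasurableSpace ι := ⊤
  simpa [lintegral_count, l2Norm] using
    lintegral_mul_le_Lp_mul_Lq (Measure.count : Measure ι) Real.HolderConjugate.two_two
      measurable_from_top.aemeasurable measurable_from_top.aemeasurable

lemma l2Norm_add_le (f g : ι → ℝ≥0∞) :
    l2Norm (fun i => f i + g i) ≤ l2Norm f + l2Norm g := by
  let _ : MeasurableSpace ι := ⊤
  simpa [lintegral_count, l2Norm] using
    lintegral_Lp_add_le (μ := (Measure.count : Measure ι)) (p := 2)
      measurable_from_top.aemeasurable measurable_from_top.aemeasurable one_le_two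

end L2

section Conv

variable {G : Type*} [AddCommGroup G]

lemma tsum_comp_sub_left (f : G → ℝ≥0∞) (g : G) : ∑' m, f (g - m) = ∑' m, f m :=
  (Equiv.subLeft g).tsum_eq f

lemma tsum_comp_sub_right (f : G → ℝ≥0∞) (g : G) : ∑' m, f (m - g) = ∑' m, f m :=
  (Equiv.subRight g).tsum_eq f

noncomputable def conv (F H : G → ℝ≥0∞) (g : G) : ℝ≥0∞ := ∑' m, F m * H (g - m)

lemma conv_comm (F H : G → ℝ≥0∞) : conv F H = conv H F := by
  ext g
  rw [conv, conv, ← tsum_comp_sub_left _ g]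
  exact tsum_congr fun m => by simp [mul_comm]

lemma conv_le_tsum_mul_tsum (F H : G → ℝ≥0∞) (g : G) :
    conv F H g ≤ (∑' m, F m) * ∑' m, H m := by
  rw [← ENNReal.tsum_mul_right]
  exact ENNReal.tsum_le_tsum fun m => by gcongr; exact ENNReal.le_tsum _

lemma l2Norm_conv_le (F H : G → ℝ≥0∞) : l2Norm (conv F H) ≤ l2Norm F * ∑' m, H m := by
  have pointwise (g : G) : conv F H g ^ 2 ≤ (∑' m, F m ^ 2 * H (g - m)) * ∑' m, H m := by
    -- Cauchy–Schwarz after splitting `H = √H · √H`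
    have hcs := tsum_mul_le_l2Norm_mul_l2Norm
      (fun m => F m * H (g - m) ^ (1 / 2 : ℝ)) (fun m => H (g - m) ^ (1 / 2 : ℝ))
    simp only [mul_assoc, ← sq, rpow_half_sq] at hcs
    calc conv F H g ^ 2
        ≤ (l2Norm fun m => F m * H (g - m) ^ (1 / 2 : ℝ)) ^ 2 *
            (l2Norm fun m => H (g - m) ^ (1 / 2 : ℝ)) ^ 2 := by
          rw [← mul_pow]; exact pow_le_pow_left₀ zero_le hcs 2
      _ = (∑' m, F m ^ 2 * H (g - m)) * ∑' m, H m := by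
          simp only [l2Norm_sq, mul_pow, rpow_half_sq]
          rw [tsum_comp_sub_left H g]
  have hsum : ∑' g, ∑' m, F m ^ 2 * H (g - m) = (∑' m, F m ^ 2) * ∑' m, H m := by
    rw [ENNReal.tsum_comm, ← ENNReal.tsum_mul_right]
    refine tsum_congr fun m => ?_
    rw [ENNReal.tsum_mul_left, tsum_comp_sub_right H m]
  rw [← sq_rpow_half (l2Norm F * _), mul_pow, l2Norm_sq, l2Norm]
  refine rpow_le_rpow ?_ (by norm_num)
  calc ∑' g, conv F H g ^ 2 ≤ ∑' g, (∑' m, F m ^ 2 * H (g - m)) * ∑' m, H m :=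
        ENNReal.tsum_le_tsum pointwise
    _ = (∑' m, F m ^ 2) * (∑' m, H m) ^ 2 := by
        rw [ENNReal.tsum_mul_right, hsum, sq, mul_assoc]

end Conv

lemma rpow_le_two_rpow_mul_add {x y z : ℝ≥0∞} {s : ℝ} (hs : 0 ≤ s) (hxyz : x ≤ y + z) :
    x ^ s ≤ 2 ^ s * (y ^ s + z ^ s) :=
  calc x ^ s ≤ (2 * max y z) ^ s := by
        refine ENNReal.rpow_le_rpow (hxyz.trans ?_) hs
        rw [two_mul]
        exact add_le_add (le_max_left _ _) (le_max_right _ _)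
    _ = 2 ^ s * max (y ^ s) (z ^ s) := by
        rw [ENNReal.mul_rpow_of_nonneg _ _ hs, (ENNReal.monotone_rpow_of_nonneg hs).map_max]
    _ ≤ 2 ^ s * (y ^ s + z ^ s) := by
        gcongr
        exact max_le le_self_add le_add_self

lemma tsum_pi_prod {ι : Type*} (f : ι → ℝ≥0∞) (n : ℕ) :
    ∑' h : Fin n → ι, ∏ k, f (h k) = (∑' i, f i) ^ n := by
  induction n with
  | zero => simp
  | succ n ih =>
    rw [← (Fin.consEquiv fun _ => ι).tsum_eq, ENNReal.tsum_prod', pow_succ',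
      ← ENNReal.tsum_mul_right]
    refine tsum_congr fun i => ?_
    simp only [Fin.consEquiv_apply, Fin.prod_univ_succ, Fin.cons_zero, Fin.cons_succ]
    rw [ENNReal.tsum_mul_left, ih]

end ENNReal

lemma tsum_ofReal_max_one_abs_rpow_neg_ne_top {q : ℝ} (hq : 1 < q) :
    ∑' n : ℤ, ENNReal.ofReal (max 1 |(n : ℝ)| ^ (-q)) ≠ ⊤ := by
  have hsum : Summable fun n : ℤ => max 1 |(n : ℝ)| ^ (-q) := by
    refine (Real.summable_abs_int_rpow hq).of_norm_bounded_eventually ?_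
    filter_upwards [Set.Finite.compl_mem_cofinite (Set.finite_singleton 0)] with n hn
    have hn1 : (1 : ℝ) ≤ |(n : ℝ)| := by
      exact_mod_cast Int.one_le_abs (by simpa using hn)
    rw [max_eq_right hn1, Real.norm_of_nonneg (by positivity)]
  rw [← ENNReal.ofReal_tsum_of_nonneg (fun n => by positivity) hsum]
  exact ENNReal.ofReal_ne_top

section Weight

variable {b : ℕ}

lemma natAbs_le_absIdx (h : Fin b → ℤ) (k : Fin b) : (h k).natAbs ≤ absIdx h :=
  Finset.le_sup (f := fun k => (h k).natAbs) (Finset.mem_univ k)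

lemma absIdx_add_le (h h' : Fin b → ℤ) : absIdx (h + h') ≤ absIdx h + absIdx h' :=
  Finset.sup_le fun k _ => (Int.natAbs_add_le _ _).trans
    (add_le_add (natAbs_le_absIdx h k) (natAbs_le_absIdx h' k))

lemma one_le_wt (h : Fin b → ℤ) : 1 ≤ wt h := le_max_left _ _

lemma wt_add_le (h h' : Fin b → ℤ) : wt (h + h') ≤ wt h + wt h' := by
  have habs : (absIdx (h + h') : ℝ) ≤ absIdx h + absIdx h' := by exact_mod_cast absIdx_add_le h h'
  have h1 := le_max_right 1 (absIdx h : ℝ)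
  have h2 := le_max_right 1 (absIdx h' : ℝ)
  exact max_le (by linarith [one_le_wt h, one_le_wt h']) (by unfold wt; linarith)

noncomputable def ewt (h : Fin b → ℤ) : ℝ≥0∞ := ENNReal.ofReal (wt h)

lemma one_le_ewt (h : Fin b → ℤ) : 1 ≤ ewt h := ENNReal.one_le_ofReal.mpr (one_le_wt h)

lemma ewt_ne_top (h : Fin b → ℤ) : ewt h ≠ ⊤ := ENNReal.ofReal_ne_top

lemma ofReal_wt_rpow (h : Fin b → ℤ) (t : ℝ) : ENNReal.ofReal (wt h ^ t) = ewt h ^ t :=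
  (ENNReal.ofReal_rpow_of_pos (zero_lt_one.trans_le (one_le_wt h))).symm

lemma ewt_rpow_le {s : ℝ} (hs : 0 ≤ s) (h m : Fin b → ℤ) :
    ewt h ^ s ≤ 2 ^ s * (ewt m ^ s + ewt (h - m) ^ s) := by
  refine ENNReal.rpow_le_two_rpow_mul_add hs ?_
  rw [ewt, ewt, ewt,
    ← ENNReal.ofReal_add (by linarith [one_le_wt m]) (by linarith [one_le_wt (h - m)])]
  refine ENNReal.ofReal_le_ofReal ?_
  simpa using wt_add_le m (h - m)

lemma tsum_ewt_rpow_neg_ne_top {p : ℝ} (hp : (b : ℝ) < p) :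
    ∑' h : Fin b → ℤ, ewt h ^ (-p) ≠ ⊤ := by
  -- for `q > 1` with `b q ≤ p`, `⟨h⟩^{-p} ≤ ∏ₖ ⟨hₖ⟩^{-q}`, whose sum factorises
  set q := 1 + (p - b) / (b + 1)
  have hq : 1 < q := lt_add_of_pos_right 1 (div_pos (sub_pos.mpr hp) (by positivity))
  have hbq : (b : ℝ) * q ≤ p := by
    have : (b : ℝ) * ((p - b) / (b + 1)) ≤ p - b := by
      rw [mul_div_assoc', div_le_iff₀ (by positivity)]
      nlinarith
    linarith
  set u : ℤ → ℝ≥0∞ := fun n => ENNReal.ofReal (max 1 |(n : ℝ)|)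
  have hu (h : Fin b → ℤ) (k : Fin b) : u (h k) ≤ ewt h := by
    refine ENNReal.ofReal_le_ofReal (max_le_max le_rfl ?_)
    rw [← Int.cast_abs, ← Nat.cast_natAbs]
    exact_mod_cast natAbs_le_absIdx h k
  have hcomp (h : Fin b → ℤ) : ewt h ^ (-p) ≤ ∏ k, u (h k) ^ (-q) :=
    calc ewt h ^ (-p) ≤ ewt h ^ ((b : ℝ) * -q) :=
          ENNReal.rpow_le_rpow_of_exponent_le (one_le_ewt h) (by linarith)
      _ = ((ewt h ^ b) ^ q)⁻¹ := by rw [ENNReal.rpow_natCast_mul, ENNReal.rpow_neg]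
      _ ≤ ((∏ k, u (h k)) ^ q)⁻¹ := by
          refine ENNReal.inv_le_inv.mpr (ENNReal.rpow_le_rpow ?_ (by linarith))
          simpa using Finset.prod_le_pow_card Finset.univ _ _ fun k _ => hu h k
      _ = ∏ k, u (h k) ^ (-q) := by
          rw [ENNReal.prod_rpow_of_ne_top (fun k _ => ENNReal.ofReal_ne_top), ENNReal.rpow_neg]
  have hu_rpow (n : ℤ) : u n ^ (-q) = ENNReal.ofReal (max 1 |(n : ℝ)| ^ (-q)) :=
    ENNReal.ofReal_rpow_of_pos (by positivity)
  refine ne_top_of_le_ne_top ?_ (ENNReal.tsum_le_tsum hcomp)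
  rw [ENNReal.tsum_pi_prod (fun n => u n ^ (-q))]
  simp only [hu_rpow]
  exact ENNReal.pow_ne_top (tsum_ofReal_max_one_abs_rpow_neg_ne_top hq)

end Weight

section DecayNorm

open ENNReal

variable {b : ℕ}

noncomputable def diagSup (A : (Fin b → ℤ) → (Fin b → ℤ) → ℂ) (h : Fin b → ℤ) : ℝ≥0∞ :=
  ⨆ k, (‖A k (k - h)‖₊ : ℝ≥0∞)

noncomputable def matMul (A B : (Fin b → ℤ) → (Fin b → ℤ) → ℂ) :
    (Fin b → ℤ) → (Fin b → ℤ) → ℂ :=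
  fun k k' => ∑' j, A k j * B j k'

lemma enorm_le_diagSup (A : (Fin b → ℤ) → (Fin b → ℤ) → ℂ) (k j : Fin b → ℤ) :
    ‖A k j‖ₑ ≤ diagSup A (k - j) := by
  refine le_iSup_of_le k ?_
  simp [enorm_eq_nnnorm]

lemma decayNorm_eq_l2Norm (A : (Fin b → ℤ) → (Fin b → ℤ) → ℂ) (t : ℝ) :
    decayNorm A t = l2Norm fun h => ewt h ^ t * diagSup A h := by
  refine congrArg (· ^ (1 / 2 : ℝ)) (tsum_congr fun h => ?_)
  rw [ofReal_wt_rpow, show (2 : ℝ) * t = t * (2 : ℕ) by push_cast; ring, rpow_mul_natCast,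
    mul_pow, diagSup]

lemma decayNorm_mono (A : (Fin b → ℤ) → (Fin b → ℤ) → ℂ) {t t' : ℝ} (htt' : t ≤ t') :
    decayNorm A t ≤ decayNorm A t' := by
  simp only [decayNorm_eq_l2Norm]
  exact l2Norm_mono fun h => by gcongr; exact one_le_ewt h

lemma l2Norm_ewt_rpow_neg_ne_top {t : ℝ} (ht : (b : ℝ) / 2 < t) :
    l2Norm (fun h : Fin b → ℤ => ewt h ^ (-t)) ≠ ⊤ := by
  refine rpow_ne_top_of_nonneg (by norm_num) ?_
  have hsq (h : Fin b → ℤ) : (ewt h ^ (-t)) ^ 2 = ewt h ^ (-(2 * t)) := by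
    rw [← rpow_mul_natCast]
    congr 1
    ring
  simp only [hsq]
  exact tsum_ewt_rpow_neg_ne_top (by linarith)

lemma tsum_diagSup_le (A : (Fin b → ℤ) → (Fin b → ℤ) → ℂ) (t : ℝ) :
    ∑' h, diagSup A h ≤ l2Norm (fun h : Fin b → ℤ => ewt h ^ (-t)) * decayNorm A t := by
  have hcancel (h : Fin b → ℤ) : ewt h ^ (-t) * (ewt h ^ t * diagSup A h) = diagSup A h := by
    rw [← mul_assoc, ← rpow_add _ _ (zero_lt_one.trans_le (one_le_ewt h)).ne' (ewt_ne_top h),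
      neg_add_cancel, rpow_zero, one_mul]
  rw [decayNorm_eq_l2Norm, ← tsum_congr hcancel]
  exact tsum_mul_le_l2Norm_mul_l2Norm _ _

lemma tsum_diagSup_ne_top {A : (Fin b → ℤ) → (Fin b → ℤ) → ℂ} {t : ℝ} (ht : (b : ℝ) / 2 < t)
    (hA : decayNorm A t ≠ ⊤) : ∑' h, diagSup A h ≠ ⊤ :=
  ne_top_of_le_ne_top (mul_ne_top (l2Norm_ewt_rpow_neg_ne_top ht) hA) (tsum_diagSup_le A t)

lemma tsum_enorm_mul_le_conv (A B : (Fin b → ℤ) → (Fin b → ℤ) → ℂ) (k k' : Fin b → ℤ) :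
    ∑' j, ‖A k j * B j k'‖ₑ ≤ conv (diagSup A) (diagSup B) (k - k') :=
  calc ∑' j, ‖A k j * B j k'‖ₑ ≤ ∑' j, diagSup A (k - j) * diagSup B (j - k') :=
        ENNReal.tsum_le_tsum fun j => by
          rw [enorm_mul]
          exact mul_le_mul' (enorm_le_diagSup A k j) (enorm_le_diagSup B j k')
    _ = conv (diagSup A) (diagSup B) (k - k') := by
        rw [conv, ← tsum_comp_sub_left _ k]
        exact tsum_congr fun m => by congr 2 <;> abel

lemma summable_norm_mul_of_tsum_diagSup_ne_top {A B : (Fin b → ℤ) → (Fin b → ℤ) → ℂ}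
    (hA : ∑' h, diagSup A h ≠ ⊤) (hB : ∑' h, diagSup B h ≠ ⊤) (k k' : Fin b → ℤ) :
    Summable fun j => ‖A k j * B j k'‖ := by
  refine Summable.of_enorm ?_
  simp only [enorm_norm]
  exact ne_top_of_le_ne_top (mul_ne_top hA hB)
    ((tsum_enorm_mul_le_conv A B k k').trans (conv_le_tsum_mul_tsum _ _ _))

lemma diagSup_matMul_le (A B : (Fin b → ℤ) → (Fin b → ℤ) → ℂ) (h : Fin b → ℤ) :
    diagSup (matMul A B) h ≤ conv (diagSup A) (diagSup B) h :=
  iSup_le fun k => by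
    have hk := tsum_enorm_mul_le_conv A B k (k - h)
    rw [_root_.sub_sub_cancel] at hk
    exact enorm_tsum_le_tsum_enorm.trans hk

lemma ewt_rpow_mul_conv_le {s : ℝ} (hs : 0 ≤ s) (F H : (Fin b → ℤ) → ℝ≥0∞) (h : Fin b → ℤ) :
    ewt h ^ s * conv F H h ≤
      2 ^ s * (conv (fun m => ewt m ^ s * F m) H h + conv (fun m => ewt m ^ s * H m) F h) := by
  rw [conv_comm (fun m => ewt m ^ s * H m), conv, conv, conv, ← ENNReal.tsum_mul_left,
    ← ENNReal.tsum_add, ← ENNReal.tsum_mul_left]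
  refine ENNReal.tsum_le_tsum fun m => ?_
  calc ewt h ^ s * (F m * H (h - m))
      ≤ 2 ^ s * (ewt m ^ s + ewt (h - m) ^ s) * (F m * H (h - m)) := by
        gcongr; exact ewt_rpow_le hs h m
    _ = 2 ^ s * (ewt m ^ s * F m * H (h - m) + F m * (ewt (h - m) ^ s * H (h - m))) := by ring

lemma l2Norm_ewt_rpow_mul_conv_le {s : ℝ} (hs : 0 ≤ s) (F H : (Fin b → ℤ) → ℝ≥0∞) :
    l2Norm (fun h => ewt h ^ s * conv F H h) ≤
      2 ^ s * (l2Norm (fun h => ewt h ^ s * F h) * ∑' h, H h +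
        l2Norm (fun h => ewt h ^ s * H h) * ∑' h, F h) :=
  calc l2Norm (fun h => ewt h ^ s * conv F H h)
      ≤ 2 ^ s * l2Norm (fun h => conv (fun m => ewt m ^ s * F m) H h +
          conv (fun m => ewt m ^ s * H m) F h) := by
        rw [← l2Norm_const_mul]
        exact l2Norm_mono (ewt_rpow_mul_conv_le hs F H)
    _ ≤ _ := by
        gcongr
        exact (l2Norm_add_le _ _).trans (add_le_add (l2Norm_conv_le _ _) (l2Norm_conv_le _ _))

noncomputable def decayConst (b : ℕ) (s s₀ : ℝ) : ℝ≥0∞ :=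
  2 ^ s * l2Norm fun h : Fin b → ℤ => ewt h ^ (-s₀)

lemma decayConst_ne_top {s s₀ : ℝ} (hs : 0 ≤ s) (hs₀ : (b : ℝ) / 2 < s₀) :
    decayConst b s s₀ ≠ ⊤ :=
  mul_ne_top (rpow_ne_top_of_nonneg hs ofNat_ne_top) (l2Norm_ewt_rpow_neg_ne_top hs₀)

theorem decayNorm_matMul_le {s : ℝ} (hs : 0 ≤ s) (s₀ : ℝ) (A B : (Fin b → ℤ) → (Fin b → ℤ) → ℂ) :
    decayNorm (matMul A B) s ≤
      decayConst b s s₀ * (decayNorm A s * decayNorm B s₀ + decayNorm A s₀ * decayNorm B s) := by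
  set K := l2Norm fun h : Fin b → ℤ => ewt h ^ (-s₀)
  calc decayNorm (matMul A B) s
      ≤ l2Norm fun h => ewt h ^ s * conv (diagSup A) (diagSup B) h := by
        rw [decayNorm_eq_l2Norm]
        exact l2Norm_mono fun h => by gcongr; exact diagSup_matMul_le A B h
    _ ≤ 2 ^ s * (decayNorm A s * ∑' h, diagSup B h + decayNorm B s * ∑' h, diagSup A h) := by
        simpa only [decayNorm_eq_l2Norm] using l2Norm_ewt_rpow_mul_conv_le hs _ _
    _ ≤ 2 ^ s * (decayNorm A s * (K * decayNorm B s₀) + decayNorm B s * (K * decayNorm A s₀)) := by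
        grw [tsum_diagSup_le A s₀, tsum_diagSup_le B s₀]
    _ = _ := by rw [decayConst]; ring

theorem decayNorm_matMul_le_mul {s₀ s : ℝ} (hs₀ : 0 ≤ s₀) (hs : s₀ ≤ s)
    (A B : (Fin b → ℤ) → (Fin b → ℤ) → ℂ) :
    decayNorm (matMul A B) s ≤ 2 * decayConst b s s₀ * decayNorm A s * decayNorm B s :=
  calc decayNorm (matMul A B) s
      ≤ decayConst b s s₀ * (decayNorm A s * decayNorm B s + decayNorm A s * decayNorm B s) := by
        grw [decayNorm_matMul_le (hs₀.trans hs) s₀ A B, decayNorm_mono A hs, decayNorm_mono B hs]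
    _ = _ := by ring

end DecayNorm

theorem stmt4_general (b : ℕ) (s₀ s : ℝ) (hs₀ : (b : ℝ) / 2 < s₀) (hs : s₀ ≤ s) :
    ∃ C₀ C : ℝ, 1 ≤ C₀ ∧ C₀ ≤ C ∧
      ∀ A B : (Fin b → ℤ) → (Fin b → ℤ) → ℂ, decayNorm A s < ⊤ → decayNorm B s < ⊤ →
        (∀ k k' : Fin b → ℤ, Summable fun j : Fin b → ℤ => ‖A k j * B j k'‖) ∧
        decayNorm (fun k k' => ∑' j : Fin b → ℤ, A k j * B j k') s ≤
          ENNReal.ofReal C * decayNorm A s₀ * decayNorm B s +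
            ENNReal.ofReal C₀ * decayNorm A s * decayNorm B s₀ ∧
        decayNorm (fun k k' => ∑' j : Fin b → ℤ, A k j * B j k') s ≤
          ENNReal.ofReal C * decayNorm A s * decayNorm B s := by
  have hs₀_pos : 0 ≤ s₀ := by linarith [show (0 : ℝ) ≤ b / 2 by positivity]
  have hc := decayConst_ne_top (hs₀_pos.trans hs) hs₀
  obtain ⟨C, hC_one, hC⟩ : ∃ C : ℝ, 1 ≤ C ∧ 2 * decayConst b s s₀ ≤ ENNReal.ofReal C := by
    refine ⟨(2 * decayConst b s s₀).toReal + 1, by simp, ?_⟩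
    rw [ENNReal.ofReal_add ENNReal.toReal_nonneg zero_le_one,
      ENNReal.ofReal_toReal (ENNReal.mul_ne_top ENNReal.ofNat_ne_top hc)]
    exact le_self_add
  have hc_le : decayConst b s s₀ ≤ ENNReal.ofReal C :=
    (le_mul_of_one_le_left' one_le_two).trans hC
  refine ⟨C, C, hC_one, le_rfl, fun A B hA hB => ⟨?_, ?_, ?_⟩⟩
  · exact summable_norm_mul_of_tsum_diagSup_ne_top (tsum_diagSup_ne_top (hs₀.trans_le hs) hA.ne)
      (tsum_diagSup_ne_top (hs₀.trans_le hs) hB.ne)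
  · refine (decayNorm_matMul_le (hs₀_pos.trans hs) s₀ A B).trans ?_
    grw [hc_le]
    exact le_of_eq (by ring)
  · exact (decayNorm_matMul_le_mul hs₀_pos hs A B).trans (by grw [hC])

theorem stmt4 (b : ℕ) (hb : 1 ≤ b) (s₀ s : ℝ) (hs₀ : (b : ℝ) / 2 < s₀) (hs : s₀ ≤ s) :
    ∃ C₀ C : ℝ, 1 ≤ C₀ ∧ C₀ ≤ C ∧
      ∀ A B : (Fin b → ℤ) → (Fin b → ℤ) → ℂ, decayNorm A s < ⊤ → decayNorm B s < ⊤ →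
        (∀ k k' : Fin b → ℤ, Summable fun j : Fin b → ℤ => ‖A k j * B j k'‖) ∧
        decayNorm (fun k k' => ∑' j : Fin b → ℤ, A k j * B j k') s ≤
          ENNReal.ofReal C * decayNorm A s₀ * decayNorm B s +
            ENNReal.ofReal C₀ * decayNorm A s * decayNorm B s₀ ∧
        decayNorm (fun k k' => ∑' j : Fin b → ℤ, A k j * B j k') s ≤
          ENNReal.ofReal C * decayNorm A s * decayNorm B s :=
  stmt4_general b s₀ s hs₀ hs
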